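/- arXiv:2102.06538 — 4 statements merged into one kernel-verified Lean document; each statement's English description precedes it below -/
import Mathlib

section
/- Let V be a K(x)-vector-space basis of A, and let a ∈ K[x] and B ∈ K[x]^{n×n} be such that aV′ = BV. Fix u ∈ K[x] and define φ_V : K[x]^n → u^{−2}K[x]^n by φ_V(p) = (a u p′ − a u′ p + u p B)/u². If deg_x(B) ≤ deg_x(a) − 1, then the standard complement N_V of im(φ_V) is a finite-dimensional K-vector space. -/
noncomputable section
open scoped Classical
open Polynomial

/-! ### The algebraic function field `A = K(x)[y]/⟨m⟩` -/

/-- The canonical image in `A = K(x)[y]/⟨m⟩` of a polynomial `p ∈ K[x]`. -/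
def toA {K : Type} [Field K] (m : Polynomial (RatFunc K)) (p : Polynomial K) :
    AdjoinRoot m :=
  algebraMap (RatFunc K) (AdjoinRoot m) (algebraMap (Polynomial K) (RatFunc K) p)

/-- `D` is the derivation on `A = K(x)[y]/⟨m⟩` extending `d/dx` on `K(x)`:
it is additive, satisfies the Leibniz rule, and restricts to `d/dx` on `K[x]`
(hence, being a derivation on a field, on all of `K(x)`). -/
structure IsDerivationOnA {K : Type} [Field K] (m : Polynomial (RatFunc K))
    (D : AdjoinRoot m → AdjoinRoot m) : Prop where
  map_add : ∀ f g, D (f + g) = D f + D g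
  leibniz : ∀ f g, D (f * g) = f * D g + g * D f
  map_poly : ∀ p : Polynomial K, D (toA m p) = toA m (Polynomial.derivative p)

/-- `W` is a basis of `A` as a vector space over `K(x)`. -/
def IsKxBasis {K : Type} [Field K] {m : Polynomial (RatFunc K)}
    (W : Fin m.natDegree → AdjoinRoot m) : Prop :=
  LinearIndependent (RatFunc K) W ∧ Submodule.span (RatFunc K) (Set.range W) = ⊤

/-- `e W′ = M W` componentwise. -/
def DerivRel {K : Type} [Field K] {m : Polynomial (RatFunc K)}
    (D : AdjoinRoot m → AdjoinRoot m) (W : Fin m.natDegree → AdjoinRoot m)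
    (e : Polynomial K) (M : Matrix (Fin m.natDegree) (Fin m.natDegree) (Polynomial K)) : Prop :=
  ∀ i, toA m e * D (W i) = ∑ j, toA m (M i j) * W j

/-- `gcd(e, m₁₁, …, mₙₙ) = 1`: the only common divisors of `e` and the entries of `M`
are units. -/
def GcdOne {K : Type} [Field K] {n : ℕ}
    (e : Polynomial K) (M : Matrix (Fin n) (Fin n) (Polynomial K)) : Prop :=
  ∀ p : Polynomial K, p ∣ e → (∀ i j, p ∣ M i j) → IsUnit p


/-! ### Polynomial reduction -/

/-- The map `φ_V` for polynomial reduction with respect to `u` and `V` (where `aV′ = BV`):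
`φ_V(p) = (a u p′ − a u′ p + u p B)/u²`, a vector of rational functions. -/
def phiV {K : Type} [Field K] {n : ℕ} (a u : Polynomial K)
    (B : Matrix (Fin n) (Fin n) (Polynomial K)) (p : Fin n → Polynomial K) :
    Fin n → RatFunc K := fun j =>
  algebraMap (Polynomial K) (RatFunc K)
      (a * u * Polynomial.derivative (p j) - a * Polynomial.derivative u * p j
        + u * ∑ i, p i * B i j) /
    algebraMap (Polynomial K) (RatFunc K) (u ^ 2)

/-- `im(φ_V) ∩ K[x]^n`: the set of polynomial vectors lying in the image of `φ_V`. -/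
def phiPolyImage {K : Type} [Field K] {n : ℕ} (a u : Polynomial K)
    (B : Matrix (Fin n) (Fin n) (Polynomial K)) : Set (Fin n → Polynomial K) :=
  {q | ∃ p : Fin n → Polynomial K,
    ∀ j, algebraMap (Polynomial K) (RatFunc K) (q j) = phiV a u B p j}

/-- The degree of a vector `p ∈ K[x]^n`, viewed as a polynomial in `x` with coefficients
in `K^n`. -/
def vdeg {K : Type} [Field K] {n : ℕ} (p : Fin n → Polynomial K) : ℕ :=
  Finset.univ.sup fun i => (p i).natDegree

/-- The leading term `lt(p) = p^{(r)} x^r` of a nonzero vector `p ∈ K[x]^n`, viewed as a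
polynomial in `x` with coefficients in `K^n`. -/
def ltVec {K : Type} [Field K] {n : ℕ} (p : Fin n → Polynomial K) :
    Fin n → Polynomial K :=
  fun i => Polynomial.C ((p i).coeff (vdeg p)) * Polynomial.X ^ (vdeg p)

/-- The monomial vector `e_i x^j` (an element of the set `S`). -/
def monomialVec {K : Type} [Field K] {n : ℕ} (i : Fin n) (j : ℕ) :
    Fin n → Polynomial K :=
  fun k => if k = i then Polynomial.X ^ j else 0

/-- The standard complement `N_V` of `im(φ_V)`: the `K`-subspace of `K[x]^n` spanned by the
monomial vectors `e_i x^j ∈ S` that are not the leading term of any (nonzero) element of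
`im(φ_V) ∩ K[x]^n`. -/
def NVcomplement {K : Type} [Field K] {n : ℕ} (a u : Polynomial K)
    (B : Matrix (Fin n) (Fin n) (Polynomial K)) : Submodule K (Fin n → Polynomial K) :=
  Submodule.span K {t | ∃ i j, t = monomialVec i j ∧
    ∀ q ∈ phiPolyImage a u B, q ≠ 0 → t ≠ ltVec q}

/-! For `v ∈ K^n`, `φ_V(u v x^{s+1}) = a (v x^{s+1})′ + v x^{s+1} B` is a polynomial vector.
Since `deg B < deg a`, its degree is at most `deg a + s`, and its coefficient there is `v N_s`
with `N_s = (s+1) lc(a) I + B^{(deg a - 1)}`. The matrix `N_s` is singular only when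
`-(s+1) lc(a)` is an eigenvalue of `B^{(deg a - 1)}`, i.e. for finitely many `s`; for every other
`s` we can choose `v` with `v N_s = e_i`, making `e_i x^{deg a + s}` a leading term. So only
finitely many `e_i x^j` span `N_V`. -/

open Matrix Filter

section Polynomial

variable {R : Type*} [Semiring R] {a b : R[X]}

lemma natDegree_X_pow_succ_mul_le_of_degree_lt (h : b.degree < a.degree) (s : ℕ) :
    (X ^ (s + 1) * b).natDegree ≤ a.natDegree + s := by
  rcases eq_or_ne b 0 with rfl | hb
  · simp
  · have := natDegree_lt_natDegree hb h
    exact natDegree_mul_le.trans (by have := natDegree_X_pow_le (R := R) (s + 1); omega)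

lemma coeff_X_pow_succ_mul_of_degree_lt (h : b.degree < a.degree) (s : ℕ) :
    (X ^ (s + 1) * b).coeff (a.natDegree + s) = b.coeff (a.natDegree - 1) := by
  rcases eq_or_ne b 0 with rfl | hb
  · simp
  · have := natDegree_lt_natDegree hb h
    rw [coeff_X_pow_mul', if_pos (by omega),
      show a.natDegree + s - (s + 1) = a.natDegree - 1 by omega]

end Polynomial

lemma eventually_isUnit_natCast_succ_mul_smul_one_add {K ι : Type*} [Field K] [CharZero K]
    [Fintype ι] [DecidableEq ι] (M : Matrix ι ι K) {c : K} (hc : c ≠ 0) :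
    ∀ᶠ s : ℕ in atTop, IsUnit (((s + 1 : K) * c) • (1 : Matrix ι ι K) + M) := by
  have hinj : Function.Injective fun s : ℕ => (s + 1 : K) * c := fun s t hst => by
    simpa using mul_right_cancel₀ hc hst
  rw [← Nat.cofinite_eq_atTop, Filter.eventually_cofinite]
  refine ((Matrix.finite_spectrum (-M)).preimage hinj.injOn).subset fun s hs => ?_
  simpa [spectrum.mem_iff, Algebra.algebraMap_eq_smul_one] using hs

section Reduction

variable {K : Type} [Field K] {n : ℕ}

lemma phiV_mul_left (a : K[X]) {u : K[X]} (hu : u ≠ 0) (B : Matrix (Fin n) (Fin n) K[X])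
    (p : Fin n → K[X]) (j : Fin n) :
    phiV a u B (fun k => u * p k) j =
      algebraMap K[X] (RatFunc K) (a * derivative (p j) + (p ᵥ* B) j) := by
  have hnum : a * u * derivative (u * p j) - a * derivative u * (u * p j)
      + u * ∑ i, u * p i * B i j = u ^ 2 * (a * derivative (p j) + (p ᵥ* B) j) := by
    have hsum : ∑ i, u * p i * B i j = u * (p ᵥ* B) j := by
      simp only [vecMul, dotProduct, Finset.mul_sum, mul_assoc]
    rw [hsum, derivative_mul]
    ring
  rw [phiV, hnum, map_mul, mul_div_cancel_left₀ _ (RatFunc.algebraMap_ne_zero (pow_ne_zero 2 hu))]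

lemma derivative_add_vecMul_mem_phiPolyImage (a : K[X]) {u : K[X]} (hu : u ≠ 0)
    (B : Matrix (Fin n) (Fin n) K[X]) (p : Fin n → K[X]) :
    (fun j => a * derivative (p j) + (p ᵥ* B) j) ∈ phiPolyImage a u B :=
  ⟨fun k => u * p k, fun j => (phiV_mul_left a hu B p j).symm⟩

lemma vdeg_eq_of_coeff_ne_zero {q : Fin n → K[X]} {i : Fin n} {N : ℕ}
    (hdeg : ∀ k, (q k).natDegree ≤ N) (hi : (q i).coeff N ≠ 0) : vdeg q = N :=
  le_antisymm (Finset.sup_le fun k _ => hdeg k)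
    ((le_natDegree_of_ne_zero hi).trans
      (Finset.le_sup (f := fun k => (q k).natDegree) (Finset.mem_univ i)))

lemma ne_zero_and_ltVec_eq_monomialVec {q : Fin n → K[X]} {i : Fin n} {N : ℕ}
    (hdeg : ∀ k, (q k).natDegree ≤ N)
    (hcoeff : ∀ k, (q k).coeff N = (Pi.single i 1 : Fin n → K) k) :
    q ≠ 0 ∧ ltVec q = monomialVec i N := by
  refine ⟨fun h => by simpa [h] using hcoeff i, ?_⟩
  have hN : vdeg q = N := vdeg_eq_of_coeff_ne_zero hdeg (i := i) (by simp [hcoeff])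
  funext k
  by_cases hk : k = i <;> simp [ltVec, monomialVec, hN, hcoeff, hk]

end Reduction

section TopCoefficient

variable {K : Type} [Field K] {n : ℕ} {a : K[X]} {B : Matrix (Fin n) (Fin n) K[X]}

lemma vecMul_C_mul_X_pow_apply (v : Fin n → K) (s : ℕ) (j : Fin n) :
    ((fun k => C (v k) * X ^ s) ᵥ* B) j = ∑ l, C (v l) * (X ^ s * B l j) := by
  simp only [vecMul, dotProduct, mul_assoc]

lemma natDegree_derivative_add_vecMul_le (hdeg : ∀ i j, (B i j).degree < a.degree)
    (v : Fin n → K) (s : ℕ) (j : Fin n) :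
    (a * derivative (C (v j) * X ^ (s + 1))
      + ((fun k => C (v k) * X ^ (s + 1)) ᵥ* B) j).natDegree ≤ a.natDegree + s := by
  rw [vecMul_C_mul_X_pow_apply, derivative_C_mul_X_pow, Nat.add_sub_cancel]
  refine natDegree_add_le_of_degree_le ?_ ?_
  · exact natDegree_mul_le.trans (Nat.add_le_add_left (natDegree_C_mul_X_pow_le _ _) _)
  · exact natDegree_sum_le_of_forall_le _ _ fun l _ =>
      (natDegree_C_mul_le _ _).trans (natDegree_X_pow_succ_mul_le_of_degree_lt (hdeg l j) s)

lemma coeff_derivative_add_vecMul (hdeg : ∀ i j, (B i j).degree < a.degree)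
    (v : Fin n → K) (s : ℕ) :
    (fun j => (a * derivative (C (v j) * X ^ (s + 1))
        + ((fun k => C (v k) * X ^ (s + 1)) ᵥ* B) j).coeff (a.natDegree + s)) =
      v ᵥ* (((s + 1 : K) * a.leadingCoeff) • 1 + B.map (coeff · (a.natDegree - 1))) := by
  funext j
  rw [vecMul_C_mul_X_pow_apply, derivative_C_mul_X_pow, Nat.add_sub_cancel, coeff_add,
    finsetSum_coeff, mul_left_comm, ← mul_assoc, coeff_mul_X_pow, coeff_C_mul, vecMul_add,
    vecMul_smul, vecMul_one, Pi.add_apply, Pi.smul_apply, smul_eq_mul]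
  simp only [coeff_C_mul, coeff_X_pow_succ_mul_of_degree_lt (hdeg _ j), vecMul, dotProduct,
    map_apply, coeff_natDegree]
  push_cast
  ring

end TopCoefficient

theorem exists_ltVec_eq_monomialVec_of_le {K : Type} [Field K] [CharZero K] {n : ℕ}
    {a u : K[X]} (hu : u ≠ 0) {B : Matrix (Fin n) (Fin n) K[X]}
    (hdeg : ∀ i j, (B i j).degree < a.degree) :
    ∃ R, ∀ i r, R ≤ r →
      ∃ q ∈ phiPolyImage a u B, q ≠ 0 ∧ ltVec q = monomialVec i r := by
  rcases eq_or_ne a 0 with rfl | ha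
  · exact ⟨0, fun i _ _ => absurd (hdeg i i) (by simp)⟩
  obtain ⟨S, hS⟩ := eventually_atTop.1 <| eventually_isUnit_natCast_succ_mul_smul_one_add
    (B.map (coeff · (a.natDegree - 1))) (leadingCoeff_ne_zero.2 ha)
  refine ⟨a.natDegree + S, fun i r hr => ?_⟩
  obtain ⟨s, rfl⟩ : ∃ s, r = a.natDegree + s := ⟨r - a.natDegree, by omega⟩
  obtain ⟨v, hv⟩ := vecMul_surjective_iff_isUnit.2 (hS s (by omega)) (Pi.single i 1)
  have hcoeff := congr_fun ((coeff_derivative_add_vecMul hdeg v s).trans hv)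
  exact ⟨_, derivative_add_vecMul_mem_phiPolyImage a hu B fun k => C (v k) * X ^ (s + 1),
    ne_zero_and_ltVec_eq_monomialVec (natDegree_derivative_add_vecMul_le hdeg v s) hcoeff⟩

theorem NV_finiteDimensional_general {K : Type} [Field K] [CharZero K]
    (m : Polynomial (RatFunc K))
    (a u : Polynomial K) (hu0 : u ≠ 0)
    (B : Matrix (Fin m.natDegree) (Fin m.natDegree) (Polynomial K))
    (hdeg : ∀ i j, (B i j).degree < a.degree) :
    FiniteDimensional K (NVcomplement a u B) := by
  obtain ⟨R, hR⟩ := exists_ltVec_eq_monomialVec_of_le hu0 hdeg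
  refine FiniteDimensional.span_of_finite K <|
    ((Set.univ ×ˢ Set.Iio R).toFinite.image fun p => monomialVec p.1 p.2).subset ?_
  rintro t ⟨i, j, rfl, hnotLt⟩
  refine ⟨(i, j), ⟨Set.mem_univ i, Set.mem_Iio.2 (not_le.1 fun hj => ?_)⟩, rfl⟩
  obtain ⟨q, hq, hq0, hlt⟩ := hR i j hj
  exact hnotLt q hq hq0 hlt.symm

/-- Let `V` be a `K(x)`-vector-space basis of `A`, and let `a ∈ K[x]` and
`B ∈ K[x]^{n×n}` be such that `aV′ = BV`. Fix `u ∈ K[x]` and define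
`φ_V(p) = (a u p′ − a u′ p + u p B)/u²`. If `deg_x(B) ≤ deg_x(a) − 1`, then the standard
complement `N_V` of `im(φ_V)` is a finite-dimensional `K`-vector space. -/
theorem NV_finiteDimensional {K : Type} [Field K] [CharZero K]
    (m : Polynomial (RatFunc K)) [Fact (Irreducible m)]
    (D : AdjoinRoot m → AdjoinRoot m) (hD : IsDerivationOnA m D)
    (V : Fin m.natDegree → AdjoinRoot m) (hV : IsKxBasis V)
    (a u : Polynomial K) (hu0 : u ≠ 0)
    (B : Matrix (Fin m.natDegree) (Fin m.natDegree) (Polynomial K))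
    (hrel : DerivRel D V a B)
    (hdeg : ∀ i j, (B i j).degree < a.degree) :
    FiniteDimensional K (NVcomplement a u B) :=
  NV_finiteDimensional_general m a u hu0 B hdeg
end
end

section
/- Let V be a K(x)-vector-space basis of A with aV′ = BV for a ∈ K[x], B ∈ K[x]^{n×n}, fix u ∈ K[x], and let φ_V(p) = (a u p′ − a u′ p + u p B)/u². Then for every p ∈ K[x]^n there exist p_1 ∈ K[x]^n and p_2 ∈ N_V such that (p/a)V = ((p_1/u)V)′ + (p_2/a)V, where N_V is the standard complement of im(φ_V). In particular, whenever q = φ_V(p), one has (q/a)V = ((p/u)V)′, so (q/a)V is integrable in A. -/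
/-!
Since `aV′ = BV`, the quotient and Leibniz rules give `((p/u)V)′ = (φ_V(p)/a)V` for every
`p ∈ K[x]^n`, which is the integrability claim. The reduction then only needs
`K[x]^n = (im φ_V ∩ K[x]^n) + N_V`, and this holds for the standard complement of any `K`-subspace
`W` of `K[x]^n`: by induction on `d`, a monomial `e_i x^d` either lies in the complement or is the
leading term of some `q ∈ W`, and then it agrees with `q` modulo vectors of degree `< d`.
-/

noncomputable section
open scoped Classical
open Polynomial

section Derivation

variable {K : Type} [Field K] {m : Polynomial (RatFunc K)} [Fact (Irreducible m)]
  {D : AdjoinRoot m → AdjoinRoot m}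

theorem toA_ne_zero {p : K[X]} (hp : p ≠ 0) : toA m p ≠ 0 := by
  simp [toA, hp]

theorem IsDerivationOnA.map_sum (hD : IsDerivationOnA m D) {ι : Type*} (s : Finset ι)
    (f : ι → AdjoinRoot m) : D (∑ i ∈ s, f i) = ∑ i ∈ s, D (f i) :=
  _root_.map_sum (AddMonoidHom.mk' D hD.map_add) f s

theorem IsDerivationOnA.map_toA_div (hD : IsDerivationOnA m D) (p : K[X]) {u : K[X]}
    (hu : u ≠ 0) :
    D (toA m p / toA m u) = (toA m (derivative p) * toA m u - toA m p * toA m (derivative u))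
      / toA m u ^ 2 := by
  have hu' := toA_ne_zero (m := m) hu
  have hq : toA m p / toA m u * toA m u = toA m p := div_mul_cancel₀ _ hu'
  have h := hD.leibniz (toA m p / toA m u) (toA m u)
  rw [hq, hD.map_poly, hD.map_poly] at h
  rw [eq_div_iff (pow_ne_zero 2 hu')]
  linear_combination (-toA m u) * h - toA m (derivative u) * hq

theorem algebraMap_phiV_div (a u : K[X]) {n : ℕ} (B : Matrix (Fin n) (Fin n) K[X])
    (p : Fin n → K[X]) (j : Fin n) (ha : a ≠ 0) (hu : u ≠ 0) :
    algebraMap (RatFunc K) (AdjoinRoot m) (phiV a u B p j / algebraMap K[X] (RatFunc K) a) =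
      (toA m (derivative (p j)) * toA m u - toA m (p j) * toA m (derivative u)) / toA m u ^ 2
        + (∑ i, toA m (p i) * toA m (B i j)) / (toA m u * toA m a) := by
  have ha' := toA_ne_zero (m := m) ha
  have hu' := toA_ne_zero (m := m) hu
  simp only [toA] at ha' hu' ⊢
  simp only [phiV, map_div₀, map_add, map_sub, map_mul, map_pow, map_sum]
  field_simp

theorem IsDerivationOnA.sum_phiV_div_mul_eq {n : ℕ} (hD : IsDerivationOnA m D)
    {V : Fin n → AdjoinRoot m} {a u : K[X]} {B : Matrix (Fin n) (Fin n) K[X]}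
    (hrel : ∀ i, toA m a * D (V i) = ∑ j, toA m (B i j) * V j) (ha : a ≠ 0) (hu : u ≠ 0)
    (p : Fin n → K[X]) :
    ∑ j, algebraMap (RatFunc K) (AdjoinRoot m)
        (phiV a u B p j / algebraMap K[X] (RatFunc K) a) * V j =
      D (∑ j, toA m (p j) / toA m u * V j) := by
  have hDV : ∀ i, D (V i) = (∑ j, toA m (B i j) * V j) / toA m a := fun i => by
    rw [eq_div_iff (toA_ne_zero ha), mul_comm, hrel]
  simp only [hD.map_sum, hD.leibniz, hDV, hD.map_toA_div _ hu, algebraMap_phiV_div a u B p _ ha hu,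
    add_mul, Finset.sum_add_distrib]
  conv_rhs => rw [add_comm]
  congr 1
  · exact Finset.sum_congr rfl fun j _ => mul_comm _ _
  · simp only [Finset.sum_div, Finset.sum_mul, Finset.mul_sum]
    rw [Finset.sum_comm]
    refine Finset.sum_congr rfl fun i _ => Finset.sum_congr rfl fun j _ => ?_
    ring

end Derivation

theorem Polynomial.degree_sub_C_mul_X_pow_lt {R : Type*} [Ring R] {f : R[X]} {d : ℕ}
    (h : f.degree < ↑(d + 1)) : (f - C (f.coeff d) * X ^ d).degree < ↑d := by
  rw [degree_lt_iff_coeff_zero]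
  intro j hj
  rcases hj.eq_or_lt with rfl | hlt
  · simp
  · simp [coeff_X_pow, hlt.ne', (degree_lt_iff_coeff_zero f _).1 h j hlt]

section StandardComplement

variable {K : Type} [Field K] {n : ℕ}

theorem degree_lt_vdeg_add_one (p : Fin n → K[X]) (k : Fin n) :
    (p k).degree < ↑(vdeg p + 1) :=
  degree_le_natDegree.trans_lt <| by
    exact_mod_cast Nat.lt_succ_of_le (Finset.le_sup (f := fun i => (p i).natDegree)
      (Finset.mem_univ k))

theorem vdeg_eq_of_monomialVec_eq_ltVec {q : Fin n → K[X]} {i : Fin n} {d : ℕ}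
    (h : monomialVec i d = ltVec q) : vdeg q = d := by
  have h' := congrArg (coeff · d) (congrFun h i)
  by_contra hne
  simp [monomialVec, ltVec, coeff_X_pow, Ne.symm hne] at h'

theorem sum_smul_monomialVec (c : Fin n → K) (d : ℕ) :
    ∑ i, c i • monomialVec i d = fun k => C (c k) * X ^ d := by
  funext k
  simp [monomialVec, smul_eq_C_mul]

def standardComplement (S : Set (Fin n → K[X])) : Submodule K (Fin n → K[X]) :=
  Submodule.span K {t | ∃ i j, t = monomialVec i j ∧ ∀ q ∈ S, q ≠ 0 → t ≠ ltVec q}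

variable (W : Submodule K (Fin n → K[X]))

theorem monomialVec_mem_sup_standardComplement {d : ℕ}
    (hlow : ∀ p : Fin n → K[X], (∀ k, (p k).degree < d) → p ∈ W ⊔ standardComplement W)
    (i : Fin n) : monomialVec i d ∈ W ⊔ standardComplement W := by
  by_cases hN : ∀ q ∈ W, q ≠ 0 → monomialVec i d ≠ ltVec q
  · exact Submodule.mem_sup_right (Submodule.subset_span ⟨i, d, rfl, hN⟩)
  push Not at hN
  obtain ⟨q, hqW, -, hlt⟩ := hN
  have hd := vdeg_eq_of_monomialVec_eq_ltVec hlt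
  have hrest : q - monomialVec i d ∈ W ⊔ standardComplement W := by
    refine hlow _ fun k => ?_
    rw [hlt, ← hd]
    exact degree_sub_C_mul_X_pow_lt (degree_lt_vdeg_add_one q k)
  simpa using Submodule.sub_mem _ (Submodule.mem_sup_left hqW) hrest

theorem sup_standardComplement_eq_top : W ⊔ standardComplement W = ⊤ := by
  suffices H : ∀ d : ℕ, ∀ p : Fin n → K[X], (∀ k, (p k).degree < d) →
      p ∈ W ⊔ standardComplement W from
    eq_top_iff.2 fun p _ => H _ p (degree_lt_vdeg_add_one p)
  intro d
  induction d with
  | zero =>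
    intro p hp
    convert Submodule.zero_mem _
    funext k
    simpa using hp k
  | succ d ih =>
    intro p hp
    have htop : (fun k => C ((p k).coeff d) * X ^ d) ∈ W ⊔ standardComplement W := by
      rw [← sum_smul_monomialVec]
      exact Submodule.sum_mem _ fun i _ =>
        Submodule.smul_mem _ _ (monomialVec_mem_sup_standardComplement W ih i)
    have hrest := ih _ fun k => degree_sub_C_mul_X_pow_lt (hp k)
    convert Submodule.add_mem _ hrest htop using 1
    funext k
    simp

end StandardComplement

section PhiV

variable {K : Type} [Field K] {n : ℕ} (a u : K[X]) (B : Matrix (Fin n) (Fin n) K[X])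

theorem phiV_add (p q : Fin n → K[X]) : phiV a u B (p + q) = phiV a u B p + phiV a u B q := by
  funext j
  simp only [phiV, Pi.add_apply]
  rw [← add_div, ← map_add]
  congr 2
  simp only [derivative_add, add_mul, Finset.sum_add_distrib]
  ring

theorem phiV_smul (c : K) (p : Fin n → K[X]) : phiV a u B (c • p) = c • phiV a u B p := by
  funext j
  have hnum : a * u * derivative (c • p j) - a * derivative u * (c • p j)
        + u * ∑ i, (c • p i) * B i j
      = c • (a * u * derivative (p j) - a * derivative u * p j + u * ∑ i, p i * B i j) := by
    simp only [smul_eq_C_mul, derivative_mul, derivative_C, zero_mul, zero_add, mul_assoc,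
      ← Finset.mul_sum]
    ring
  simp only [phiV, Pi.smul_apply, hnum, algebraMap.coe_smul, smul_div_assoc]

def phiPolySubmodule : Submodule K (Fin n → K[X]) where
  carrier := phiPolyImage a u B
  zero_mem' := ⟨0, fun j => by simp [phiV]⟩
  add_mem' := by
    rintro q q' ⟨p, hp⟩ ⟨p', hp'⟩
    exact ⟨p + p', fun j => by simp [phiV_add, hp, hp']⟩
  smul_mem' := by
    rintro c q ⟨p, hp⟩
    exact ⟨c • p, fun j => by
      rw [phiV_smul, Pi.smul_apply, Pi.smul_apply, ← hp]
      exact algebraMap.coe_smul c (q j) (RatFunc K)⟩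

theorem NVcomplement_eq_standardComplement :
    NVcomplement a u B = standardComplement (phiPolySubmodule a u B) :=
  rfl

end PhiV

theorem polynomial_reduction_general {K : Type} [Field K]
    (m : Polynomial (RatFunc K)) [Fact (Irreducible m)]
    (D : AdjoinRoot m → AdjoinRoot m) (hD : IsDerivationOnA m D)
    (V : Fin m.natDegree → AdjoinRoot m)
    (a u : Polynomial K) (ha0 : a ≠ 0) (hu0 : u ≠ 0)
    (B : Matrix (Fin m.natDegree) (Fin m.natDegree) (Polynomial K))
    (hrel : DerivRel D V a B) :
    ∀ p : Fin m.natDegree → Polynomial K,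
      (∃ p₁ : Fin m.natDegree → Polynomial K, ∃ p₂ ∈ NVcomplement a u B,
        ∑ i, toA m (p i) / toA m a * V i =
          D (∑ i, toA m (p₁ i) / toA m u * V i) +
            ∑ i, toA m (p₂ i) / toA m a * V i) ∧
      ((∑ j, algebraMap (RatFunc K) (AdjoinRoot m)
          (phiV a u B p j / algebraMap (Polynomial K) (RatFunc K) a) * V j) =
        D (∑ j, toA m (p j) / toA m u * V j)) ∧
      (∃ g : AdjoinRoot m,
        (∑ j, algebraMap (RatFunc K) (AdjoinRoot m)
          (phiV a u B p j / algebraMap (Polynomial K) (RatFunc K) a) * V j) = D g) := by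
  intro p
  have hφ := hD.sum_phiV_div_mul_eq hrel ha0 hu0
  refine ⟨?_, hφ p, _, hφ p⟩
  have hp : p ∈ phiPolySubmodule a u B ⊔ NVcomplement a u B := by
    rw [NVcomplement_eq_standardComplement, sup_standardComplement_eq_top]
    exact Submodule.mem_top
  obtain ⟨w, ⟨p₁, hp₁⟩, r, hr, rfl⟩ := Submodule.mem_sup.1 hp
  refine ⟨p₁, r, hr, ?_⟩
  rw [← hφ p₁, ← Finset.sum_add_distrib]
  refine Finset.sum_congr rfl fun j _ => ?_
  simp only [toA, Pi.add_apply, map_add, hp₁ j, map_div₀, add_div, add_mul]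

/-- Let `V` be a `K(x)`-vector-space basis of `A` with `aV′ = BV`, fix
`u ∈ K[x]`, and let `φ_V(p) = (a u p′ − a u′ p + u p B)/u²`. Then for every `p ∈ K[x]^n`
there exist `p₁ ∈ K[x]^n` and `p₂ ∈ N_V` such that `(p/a)V = ((p₁/u)V)′ + (p₂/a)V`, where
`N_V` is the standard complement of `im(φ_V)`. In particular, whenever `q = φ_V(p)`, one
has `(q/a)V = ((p/u)V)′`, so `(q/a)V` is integrable in `A`. -/
theorem polynomial_reduction {K : Type} [Field K] [CharZero K]
    (m : Polynomial (RatFunc K)) [Fact (Irreducible m)]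
    (D : AdjoinRoot m → AdjoinRoot m) (hD : IsDerivationOnA m D)
    (V : Fin m.natDegree → AdjoinRoot m) (hV : IsKxBasis V)
    (a u : Polynomial K) (ha0 : a ≠ 0) (hu0 : u ≠ 0)
    (B : Matrix (Fin m.natDegree) (Fin m.natDegree) (Polynomial K))
    (hrel : DerivRel D V a B) :
    ∀ p : Fin m.natDegree → Polynomial K,
      (∃ p₁ : Fin m.natDegree → Polynomial K, ∃ p₂ ∈ NVcomplement a u B,
        ∑ i, toA m (p i) / toA m a * V i =
          D (∑ i, toA m (p₁ i) / toA m u * V i) +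
            ∑ i, toA m (p₂ i) / toA m a * V i) ∧
      ((∑ j, algebraMap (RatFunc K) (AdjoinRoot m)
          (phiV a u B p j / algebraMap (Polynomial K) (RatFunc K) a) * V j) =
        D (∑ j, toA m (p j) / toA m u * V j)) ∧
      (∃ g : AdjoinRoot m,
        (∑ j, algebraMap (RatFunc K) (AdjoinRoot m)
          (phiV a u B p j / algebraMap (Polynomial K) (RatFunc K) a) * V j) = D g) :=
  polynomial_reduction_general m D hD V a u ha0 hu0 B hrel
end
end

section
/- If V is a local integral basis of A at infinity, then V is suitable at infinity: for a ∈ K[x] and B ∈ K[x]^{n×n} with aV′ = BV one has deg_x(B) < deg_x(a). -/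
noncomputable section
open scoped Classical

open Polynomial

/-- Termwise derivative (w.r.t. `x`) of a generalized (Hahn/Puiseux) series in `x - a`:
the exponent-`q` coefficient of `P'` is `(q+1)` times the exponent-`(q+1)` coefficient of `P`. -/
def hderiv {F : Type} [Field F] (P : HahnSeries ℚ F) : HahnSeries ℚ F where
  coeff q := ((q + 1 : ℚ) : F) * P.coeff (q + 1)
  isPWO_support' := by
    have hsub : (Function.support fun q : ℚ => ((q + 1 : ℚ) : F) * P.coeff (q + 1))
        ⊆ (fun q : ℚ => q - 1) '' P.support := by
      intro q hq
      refine ⟨q + 1, ?_, by ring⟩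
      intro h0
      simp [Function.mem_support, h0] at hq
    exact (P.isPWO_support.image_of_monotoneOn
      (fun x _ y _ hxy => by simpa using hxy)).mono hsub

/-- The valuation of a generalized (Hahn/Puiseux) series: the least exponent occurring,
and `⊤` for the zero series. -/
def hval {F : Type} [Field F] (P : HahnSeries ℚ F) : WithTop ℚ :=
  if h : P = 0 then ⊤
  else ((P.isWF_support.min (HahnSeries.support_nonempty_iff.mpr h) : ℚ) : WithTop ℚ)

/-- A series is ramified if some exponent in its support is not an integer. -/
def Ramified {F : Type} [Field F] (P : HahnSeries ℚ F) : Prop :=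
  ∃ q ∈ P.support, ∀ z : ℤ, (z : ℚ) ≠ q

/-- The set of fractional (non-integer) exponents occurring in a series. -/
def fracSupport {F : Type} [Field F] (P : HahnSeries ℚ F) : Set ℚ :=
  {q | q ∈ P.support ∧ ∀ z : ℤ, (z : ℚ) ≠ q}

/-- The minimal fractional exponent `δ(P)` of a series; `⊤` if `P` is not ramified. -/
def delta {F : Type} [Field F] (P : HahnSeries ℚ F) : WithTop ℚ :=
  if h : (fracSupport P).Nonempty then
    (((P.isWF_support.mono (fun q hq => hq.1)).min h : ℚ) : WithTop ℚ)
  else ⊤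

/-- A Hahn series over `ℚ` is a Puiseux series if its exponents have a common denominator. -/
def IsPuiseux {F : Type} [Field F] (P : HahnSeries ℚ F) : Prop :=
  ∃ r : ℕ, 0 < r ∧ ∀ q ∈ P.support, ∃ z : ℤ, (z : ℚ) / r = q

/-! ### Puiseux expansions at infinity -/

/-- Termwise derivative w.r.t. `x` of a generalized (Hahn/Puiseux) series at infinity:
here the Hahn series variable `t` stands for `x⁻¹`, so `t^q = x^{-q}` and
`d/dx (t^q) = -q t^{q+1}`; hence the exponent-`s` coefficient of `P′` is `-(s-1)` times
the exponent-`(s-1)` coefficient of `P`. -/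
def hderivInf {F : Type} [Field F] (P : HahnSeries ℚ F) : HahnSeries ℚ F where
  coeff s := ((-(s - 1) : ℚ) : F) * P.coeff (s - 1)
  isPWO_support' := by
    have hsub : (Function.support fun s : ℚ => ((-(s - 1) : ℚ) : F) * P.coeff (s - 1))
        ⊆ (fun s : ℚ => s + 1) '' P.support := by
      intro s hs
      refine ⟨s - 1, ?_, by ring⟩
      intro h0
      simp [Function.mem_support, h0] at hs
    exact (P.isPWO_support.image_of_monotoneOn
      (fun x _ y _ hxy => by simpa using hxy)).mono hsub

/-- The family of the `n` distinct `K(x)`-embeddings of `A = K(x)[y]/⟨m⟩` into the field of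
Puiseux series around infinity (series in `t = x⁻¹`): ring homomorphisms into the Hahn
series field whose values are Puiseux series, sending constants `c ∈ K` to constant series
and the rational function `x` to the series `t⁻¹`, i.e. `single (-1) 1`. -/
structure EmbFamilyInf (K F : Type) [Field K] [Field F] [Algebra K F]
    (m : Polynomial (RatFunc K)) where
  emb : Fin m.natDegree → (AdjoinRoot m →+* HahnSeries ℚ F)
  emb_injective : Function.Injective emb
  emb_C : ∀ i (c : K), emb i (toA m (Polynomial.C c)) = HahnSeries.single 0 (algebraMap K F c)
  emb_X : ∀ i, emb i (toA m Polynomial.X) = HahnSeries.single (-1 : ℚ) 1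
  emb_puiseux : ∀ i f, IsPuiseux (emb i f)

/-- The embeddings at infinity are differential homomorphisms (w.r.t. `d/dx`). -/
def IsDiffFamilyInf {K F : Type} [Field K] [Field F] [Algebra K F]
    {m : Polynomial (RatFunc K)} (D : AdjoinRoot m → AdjoinRoot m)
    (σ : EmbFamilyInf K F m) : Prop :=
  ∀ i f, σ.emb i (D f) = hderivInf (σ.emb i f)

/-- `f ∈ A` is locally integral at infinity: `val_∞(f) ≥ 0`. -/
def LocIntegralAtInf {K F : Type} [Field K] [Field F] [Algebra K F]
    {m : Polynomial (RatFunc K)} (σ : EmbFamilyInf K F m)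
    (f : AdjoinRoot m) : Prop :=
  ∀ i, 0 ≤ hval (σ.emb i f)

/-- The rational function `r` belongs to `K(x)_∞`, i.e. `r = p/q` with
`deg_x(p) ≤ deg_x(q)`. -/
def NoPoleAtInf {K : Type} [Field K] (r : RatFunc K) : Prop :=
  ∃ p q : Polynomial K, q ≠ 0 ∧ p.degree ≤ q.degree ∧
    r * algebraMap (Polynomial K) (RatFunc K) q = algebraMap (Polynomial K) (RatFunc K) p

/-- `V` is a local integral basis of `A` at infinity: a `K(x)`-vector-space basis consisting
of elements locally integral at infinity, such that every element of `A` that is locally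
integral at infinity is a linear combination of `V` with coefficients in `K(x)_∞`. -/
def IsLocalIntegralBasisAtInf {K F : Type} [Field K] [Field F] [Algebra K F]
    {m : Polynomial (RatFunc K)} (σ : EmbFamilyInf K F m)
    (V : Fin m.natDegree → AdjoinRoot m) : Prop :=
  IsKxBasis V ∧ (∀ i, LocIntegralAtInf σ (V i)) ∧
    ∀ f, LocIntegralAtInf σ f → ∃ c : Fin m.natDegree → RatFunc K,
      (∀ i, NoPoleAtInf (c i)) ∧ f = ∑ i, algebraMap (RatFunc K) (AdjoinRoot m) (c i) * V i

/-!
A locally integral `f` has Puiseux expansions in `t = x⁻¹` with nonnegative exponents only, and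
`d/dx` sends `t^q` to `-q t^(q+1)`, so `x f′` is again locally integral. Hence `x V_i′` has
coordinates `c_j ∈ K(x)_∞` in the basis `V`; comparing with `a V_i′ = ∑ B_ij V_j` gives
`x B_ij = a c_j`, so `deg B_ij + 1 ≤ deg a`.
-/

lemma hval_eq_orderTop {F : Type} [Field F] (P : HahnSeries ℚ F) : hval P = P.orderTop := rfl

lemma orderTop_add_one_le_orderTop_hderivInf {F : Type} [Field F] (P : HahnSeries ℚ F) :
    P.orderTop + 1 ≤ (hderivInf P).orderTop := by
  refine HahnSeries.le_orderTop_iff_forall.mpr fun s hs => ?_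
  have hlt : ((s - 1 : ℚ) : WithTop ℚ) < P.orderTop := by
    cases h : P.orderTop with
    | top => exact WithTop.coe_lt_top _
    | coe v =>
      rw [h, ← WithTop.coe_one, ← WithTop.coe_add, WithTop.coe_lt_coe] at hs
      exact WithTop.coe_lt_coe.mpr (by linarith)
  show ((-(s - 1) : ℚ) : F) * P.coeff (s - 1) = 0
  rw [HahnSeries.coeff_eq_zero_of_lt_orderTop hlt, mul_zero]

lemma LocIntegralAtInf.X_mul_deriv {K F : Type} [Field K] [Field F] [Algebra K F]
    {m : Polynomial (RatFunc K)} {D : AdjoinRoot m → AdjoinRoot m} {σ : EmbFamilyInf K F m}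
    (hσ : IsDiffFamilyInf D σ) {f : AdjoinRoot m} (hf : LocIntegralAtInf σ f) :
    LocIntegralAtInf σ (toA m X * D f) := by
  intro i
  have hfi : 0 ≤ (σ.emb i f).orderTop := hf i
  rw [hval_eq_orderTop, map_mul, σ.emb_X, hσ, HahnSeries.orderTop_mul,
    HahnSeries.orderTop_single one_ne_zero]
  calc (0 : WithTop ℚ) = ((-1 : ℚ) : WithTop ℚ) + (0 + 1) := by norm_num
    _ ≤ ((-1 : ℚ) : WithTop ℚ) + ((σ.emb i f).orderTop + 1) := by gcongr
    _ ≤ _ := by gcongr; exact orderTop_add_one_le_orderTop_hderivInf _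

lemma NoPoleAtInf.degree_le_of_algebraMap_eq_mul {K : Type} [Field K] {c : RatFunc K}
    (hc : NoPoleAtInf c) {u a : K[X]}
    (h : algebraMap K[X] (RatFunc K) u = algebraMap K[X] (RatFunc K) a * c) :
    u.degree ≤ a.degree := by
  obtain ⟨p, q, hq, hpq, hcq⟩ := hc
  have huq : u * q = a * p := IsFractionRing.injective K[X] (RatFunc K) <| by
    rw [map_mul, map_mul, h, mul_assoc, hcq]
  refine WithBot.le_of_add_le_add_right (degree_ne_bot.mpr hq) ?_
  calc u.degree + q.degree = a.degree + p.degree := by rw [← degree_mul, ← degree_mul, huq]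
    _ ≤ a.degree + q.degree := by gcongr

lemma Polynomial.degree_lt_of_degree_X_mul_le {R : Type*} [Semiring R] [Nontrivial R] {a b : R[X]}
    (ha : a ≠ 0) (h : (X * b).degree ≤ a.degree) : b.degree < a.degree := by
  rcases eq_or_ne b 0 with rfl | hb
  · simpa [bot_lt_iff_ne_bot] using ha
  · exact (degree_lt_degree_mul_X hb).trans_le (by rwa [← X_mul])

theorem suitableAtInfinity_of_localIntegralBasisAtInf_general {K : Type} [Field K]
    (m : Polynomial (RatFunc K))
    (D : AdjoinRoot m → AdjoinRoot m)
    (σ : EmbFamilyInf K (AlgebraicClosure K) m) (hσ : IsDiffFamilyInf D σ)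
    (V : Fin m.natDegree → AdjoinRoot m)
    (hV : IsLocalIntegralBasisAtInf σ V)
    (a : Polynomial K) (B : Matrix (Fin m.natDegree) (Fin m.natDegree) (Polynomial K))
    (ha0 : a ≠ 0) (hrel : DerivRel D V a B) :
    ∀ i j, (B i j).degree < a.degree := by
  intro i j
  obtain ⟨⟨hind, -⟩, hint, hgen⟩ := hV
  obtain ⟨c, hc, hsum⟩ := hgen _ ((hint i).X_mul_deriv hσ)
  have hcoord :
      algebraMap K[X] (RatFunc K) (X * B i j) = algebraMap K[X] (RatFunc K) a * c j := by
    refine Fintype.linearIndependent_iffₛ.mp hind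
      (fun k => algebraMap K[X] (RatFunc K) (X * B i k))
      (fun k => algebraMap K[X] (RatFunc K) a * c k) ?_ j
    have hrel_i := hrel i
    simp only [toA] at hrel_i hsum
    simp only [Algebra.smul_def, map_mul, mul_assoc, ← Finset.mul_sum]
    rw [← hrel_i, ← hsum]
    ring
  exact degree_lt_of_degree_X_mul_le ha0 ((hc j).degree_le_of_algebraMap_eq_mul hcoord)

/-- If `V` is a local integral basis of `A` at infinity, then `V` is suitable
at infinity: for `a ∈ K[x]` and `B ∈ K[x]^{n×n}` with `aV′ = BV` one has
`deg_x(B) < deg_x(a)`. -/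
theorem suitableAtInfinity_of_localIntegralBasisAtInf {K : Type} [Field K] [CharZero K]
    (m : Polynomial (RatFunc K)) [Fact (Irreducible m)]
    (D : AdjoinRoot m → AdjoinRoot m) (hD : IsDerivationOnA m D)
    (σ : EmbFamilyInf K (AlgebraicClosure K) m) (hσ : IsDiffFamilyInf D σ)
    (V : Fin m.natDegree → AdjoinRoot m)
    (hV : IsLocalIntegralBasisAtInf σ V)
    (a : Polynomial K) (B : Matrix (Fin m.natDegree) (Fin m.natDegree) (Polynomial K))
    (ha0 : a ≠ 0) (hrel : DerivRel D V a B) :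
    ∀ i j, (B i j).degree < a.degree :=
  suitableAtInfinity_of_localIntegralBasisAtInf_general m D σ hσ V hV a B ha0 hrel
end
end

section
/- Let R be a differential ring with two commuting derivations D_x and D_t, let f ∈ R, and suppose g_0, h_0, …, g_r, h_r ∈ R satisfy f = D_x(g_0) + h_0 and D_t(h_{i−1}) = D_x(g_i) + h_i for 1 ≤ i ≤ r. If c_0, …, c_r are constants with respect to D_t and D_x (i.e., D_t(c_i) = D_x(c_i) = 0), not all zero, such that c_0 h_0 + … + c_r h_r = 0, then Σ_{i=0}^r c_i D_t^i(f) lies in the image of D_x, so L = c_0 + c_1 D_t + … + c_r D_t^r is a telescoper for f. -/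
/-- Let `R` be a differential ring with two commuting derivations `D_x` and
`D_t`, let `f ∈ R`, and suppose `g_0, h_0, …, g_r, h_r ∈ R` satisfy `f = D_x(g_0) + h_0`
and `D_t(h_{i−1}) = D_x(g_i) + h_i` for `1 ≤ i ≤ r`. If `c_0, …, c_r` are constants with
respect to `D_t` and `D_x`, not all zero, such that `c_0 h_0 + … + c_r h_r = 0`, then
`Σ_{i=0}^r c_i D_t^i(f)` lies in the image of `D_x`; so `L = c_0 + c_1 D_t + … + c_r D_t^r`
is a telescoper for `f`. -/
theorem reduction_based_creative_telescoping {R : Type} [CommRing R]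
    (Dx Dt : R → R)
    (hDx_add : ∀ a b, Dx (a + b) = Dx a + Dx b)
    (hDx_mul : ∀ a b, Dx (a * b) = a * Dx b + b * Dx a)
    (hDt_add : ∀ a b, Dt (a + b) = Dt a + Dt b)
    (hDt_mul : ∀ a b, Dt (a * b) = a * Dt b + b * Dt a)
    (hcomm : ∀ a, Dx (Dt a) = Dt (Dx a))
    (r : ℕ) (f : R) (g h : ℕ → R)
    (hinit : f = Dx (g 0) + h 0)
    (hstep : ∀ i, 1 ≤ i → i ≤ r → Dt (h (i - 1)) = Dx (g i) + h i)
    (c : ℕ → R)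
    (hconst : ∀ i ≤ r, Dt (c i) = 0 ∧ Dx (c i) = 0)
    (hnotall : ∃ i ≤ r, c i ≠ 0)
    (hdep : ∑ i ∈ Finset.range (r + 1), c i * h i = 0) :
    ∃ G : R, ∑ i ∈ Finset.range (r + 1), c i * (Dt^[i] f) = Dx G := by
  have hDx0 : Dx 0 = 0 := by
    have h00 := hDx_add 0 0
    simp only [add_zero] at h00
    exact (right_eq_add.mp h00)
  -- the cumulative certificates
  let G : ℕ → R := fun i => Nat.rec (g 0) (fun n Gn => Dt Gn + g (n + 1)) i
  have key : ∀ i ≤ r, Dt^[i] f = Dx (G i) + h i := by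
    intro i hi
    induction i with
    | zero => exact hinit
    | succ n ih =>
      have hn : n ≤ r := Nat.le_of_succ_le hi
      have := ih hn
      have hs := hstep (n + 1) (Nat.succ_le_succ (Nat.zero_le n)) hi
      simp only [Nat.add_sub_cancel] at hs
      rw [Function.iterate_succ_apply', this, hDt_add, ← hcomm, hs]
      show Dx (Dt (G n)) + (Dx (g (n + 1)) + h (n + 1)) = Dx (Dt (G n) + g (n + 1)) + h (n + 1)
      rw [hDx_add]; ring
  refine ⟨∑ i ∈ Finset.range (r + 1), c i * G i, ?_⟩
  have hsum : ∀ (s : Finset ℕ) (F : ℕ → R),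
      Dx (∑ i ∈ s, F i) = ∑ i ∈ s, Dx (F i) := by
    intro s F
    induction s using Finset.induction with
    | empty => simpa using hDx0
    | insert a s hx ih => rw [Finset.sum_insert hx, hDx_add, ih, Finset.sum_insert hx]
  rw [hsum]
  have : ∀ i ∈ Finset.range (r + 1),
      c i * Dt^[i] f = Dx (c i * G i) + c i * h i := by
    intro i hi
    have hir : i ≤ r := Nat.lt_succ_iff.mp (Finset.mem_range.mp hi)
    rw [key i hir, hDx_mul, (hconst i hir).2]
    ring
  rw [Finset.sum_congr rfl this, Finset.sum_add_distrib, hdep, add_zero]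
end
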